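/- Let w be a Kreweras word of length 3n. Then ε_{pro(w)}(i) = ε_w(i+1) for all 1 ≤ i ≤ 3n−1, and ε_{pro(w)}(3n) = −ε_w(1), where −B := C and −C := B. -/

import Mathlib

/-- The three letters of a Kreweras word. -/
inductive KLetter : Type
  | A | B | C
deriving DecidableEq, Repr

open KLetter

/-- `w` is a Kreweras word of length `3 * n`: it has `n` `A`'s, `n` `B`'s, `n` `C`'s,
and every prefix has at least as many `A`'s as `B`'s and at least as many `A`'s as `C`'s. -/
def IsKrewerasWord (n : ℕ) (w : List KLetter) : Prop :=
  w.length = 3 * n ∧ w.count A = n ∧ w.count B = n ∧ w.count C = n ∧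
  ∀ k : ℕ, (w.take k).count B ≤ (w.take k).count A ∧
           (w.take k).count C ≤ (w.take k).count A

/-- `kiota w` is the smallest index `ι ≥ 1` (1-indexed) such that the prefix of
length `ι` of `w` has equally many `A`'s as `B`'s, or equally many `A`'s as `C`'s
(and `0` if no such index exists). -/
def kiota (w : List KLetter) : ℕ :=
  (((List.range (w.length + 1)).filter fun k =>
      decide (1 ≤ k) &&
      (((w.take k).count A == (w.take k).count B) ||
       ((w.take k).count A == (w.take k).count C))).headD 0)

/-- Promotion of a Kreweras word:
`pro w = (w₂, …, w_{ι-1}, A, w_{ι+1}, …, w_{3n}, w_ι)` where `ι = kiota w`. -/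
def pro (w : List KLetter) : List KLetter :=
  ((w.drop 1).set (kiota w - 2) A) ++ [w.getD (kiota w - 1) A]

/-- The trip permutation `σ_w` of a Kreweras word of length `3 * n`, as a function on
1-indexed positions: `σ_w i` is the unique element of `{1, …, 3n}` congruent to
`kiota (pro^[i-1] w) + i - 1` modulo `3 * n`. -/
def ksigma (n : ℕ) (w : List KLetter) (i : ℕ) : ℕ :=
  (kiota (pro^[i - 1] w) + i - 2) % (3 * n) + 1

/-- `keps w i` is the letter of `pro^[i-1] w` in (1-indexed) position `kiota (pro^[i-1] w)`. -/
def keps (w : List KLetter) (i : ℕ) : KLetter :=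
  (pro^[i - 1] w).getD (kiota (pro^[i - 1] w) - 1) A

/-- The negation swapping `B` and `C` (and fixing `A`). -/
def negL : KLetter → KLetter
  | A => A
  | B => C
  | C => B

open Classical in
/-- The involution `τ_i` on Kreweras words of length `3 * n`: swap the letters in
(1-indexed) positions `i` and `i + 1` if the result is again a Kreweras word,
and otherwise do nothing. -/
noncomputable def tau (n i : ℕ) (w : List KLetter) : List KLetter :=
  let w' := (w.set (i - 1) (w.getD i A)).set i (w.getD (i - 1) A)
  if IsKrewerasWord n w' then w' else w

/-- `tauDown n j = τ_j ∘ τ_{j-1} ∘ ⋯ ∘ τ_1`. -/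
noncomputable def tauDown (n : ℕ) : ℕ → List KLetter → List KLetter
  | 0, w => w
  | j + 1, w => tau n (j + 1) (tauDown n j w)

/-- `evacAux n j = (tauDown n 1) ∘ (tauDown n 2) ∘ ⋯ ∘ (tauDown n j)`. -/
noncomputable def evacAux (n : ℕ) : ℕ → List KLetter → List KLetter
  | 0, w => w
  | j + 1, w => evacAux n j (tauDown n (j + 1) w)

/-- Evacuation on Kreweras words of length `3 * n`:
`evac = (τ_1) ∘ (τ_2 ∘ τ_1) ∘ ⋯ ∘ (τ_{3n-1} ∘ ⋯ ∘ τ_2 ∘ τ_1)`. -/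
noncomputable def evac (n : ℕ) (w : List KLetter) : List KLetter :=
  evacAux n (3 * n - 1) w

/-- `tauAsc n k c = τ_{k+c-1} ∘ ⋯ ∘ τ_{k+1} ∘ τ_k`. -/
noncomputable def tauAsc (n k : ℕ) : ℕ → List KLetter → List KLetter
  | 0, w => w
  | j + 1, w => tau n (k + j) (tauAsc n k j w)

/-- `evacStarAux n j = (tauAsc n 1 (3n-1)) ∘ (tauAsc n 2 (3n-2)) ∘ ⋯ ∘ (tauAsc n j (3n-j))`. -/
noncomputable def evacStarAux (n : ℕ) : ℕ → List KLetter → List KLetter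
  | 0, w => w
  | j + 1, w => evacStarAux n j (tauAsc n (j + 1) (3 * n - (j + 1)) w)

/-- Dual evacuation on Kreweras words of length `3 * n`:
`evac* = (τ_{3n-1} ∘ ⋯ ∘ τ_1) ∘ (τ_{3n-1} ∘ ⋯ ∘ τ_2) ∘ ⋯ ∘ (τ_{3n-1})`. -/
noncomputable def evacStar (n : ℕ) (w : List KLetter) : List KLetter :=
  evacStarAux n (3 * n - 1) w

/-- The three-element "V"-shaped poset: `a < b`, `a < c`, with `b`, `c` incomparable. -/
inductive VP : Type
  | a | b | c
deriving DecidableEq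

instance : PartialOrder VP where
  le x y := x = y ∨ x = VP.a
  le_refl x := Or.inl rfl
  le_trans x y z hxy hyz := by
    rcases hxy with rfl | rfl
    · exact hyz
    · exact Or.inr rfl
  le_antisymm x y hxy hyx := by
    rcases hxy with rfl | rfl
    · rfl
    · rcases hyx with rfl | rfl <;> rfl

/-- The labeling of elements of `V(n) = VP × Fin n` by letters. -/
def vlabel {n : ℕ} (p : VP × Fin n) : KLetter :=
  match p.1 with
  | VP.a => A
  | VP.b => B
  | VP.c => C

/-- `L` is a linear extension of `V(n) = VP × Fin n` (with the product order):
a list of all elements of `V(n)`, each appearing once, such that `L_i ≤ L_j`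
implies `i ≤ j`. -/
def IsLinearExtension (n : ℕ) (L : List (VP × Fin n)) : Prop :=
  L.Nodup ∧ (∀ p : VP × Fin n, p ∈ L) ∧
  ∀ i j : Fin L.length, L.get i ≤ L.get j → (i : ℕ) ≤ (j : ℕ)

/-- A connected Kreweras word: a Kreweras word of length `3 * n` having no proper
nonempty consecutive substring which is itself a Kreweras word. -/
def ConnectedKrewerasWord (n : ℕ) (w : List KLetter) : Prop :=
  IsKrewerasWord n w ∧
  ∀ (u : List KLetter) (m : ℕ), u <:+: w → u ≠ [] → u ≠ w → ¬ IsKrewerasWord m u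

/-!
Read a Kreweras word as a walk, with `excess y v k` the number of `A`s minus the number of `y`s
among the first `k` letters. Then `ι(v)` is the first time the walk `(excess B, excess C)`
touches an axis, and `ε_v(1)` is the letter whose excess vanishes there.

Promotion shifts `ε` by one index, which is the first claim. The last letter of `pro w` is
`ε_w(1)`; each further promotion moves it one step to the left until it is the letter removed at
position `ι`, in some `u = pro^[t] (pro w)` with `ι(u) + t = 3n`. Hence
`ε_{pro w}(3n) = ε_u(ι(u))` and `ε_u(1) = ε_w(1)`, and it remains to show
`ε_u(ι(u)) = -ε_u(1)` for every Kreweras word `u`.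

For this, follow the `A` that `pro` writes at position `ι(u) - 1`; it reaches the front after
`ι(u) - 2` more promotions. The invariant carried along (`ReturnsFirst`) is that after this `A`
the excess of `-ε_u(1)` comes back to its level before the excess of `ε_u(1)` does. Promotion
changes the excesses by a constant on each side of its own `ι`, and the first return after the
tracked `A` always lies on one side: if the `A` comes before `ι`, the excess of the letter removed
at `ι` rises at the `A` and vanishes at `ι`, so it returns before `ι`. Once the `A` is the first
letter, the invariant says that the next `ι` is reached through `-ε_u(1)`.
-/

def excess (y : KLetter) (v : List KLetter) (k : ℕ) : ℤ :=
  ((v.take k).count A : ℤ) - (v.take k).count y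

def TouchesAxis (v : List KLetter) (k : ℕ) : Prop :=
  excess B v k = 0 ∨ excess C v k = 0

section Excess

variable {y : KLetter} {v : List KLetter} {k : ℕ}

@[simp]
lemma excess_zero : excess y v 0 = 0 := by
  simp [excess]

lemma excess_succ (hk : k < v.length) :
    excess y v (k + 1) =
      excess y v k + (if v.getD k A = A then 1 else 0) - (if v.getD k A = y then 1 else 0) := by
  rw [List.getD_eq_getElem _ _ hk]
  simp only [excess, List.take_add_one, List.getElem?_eq_getElem hk, Option.toList_some,
    List.count_append, List.count_singleton, beq_iff_eq]
  split_ifs <;> push_cast <;> ring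

lemma excess_of_length_le (hk : v.length ≤ k) :
    excess y v k = (v.count A : ℤ) - v.count y := by
  simp [excess, List.take_of_length_le hk]

lemma sub_one_le_excess_succ : excess y v k - 1 ≤ excess y v (k + 1) := by
  rcases lt_or_ge k v.length with hk | hk
  · rw [excess_succ hk]
    split_ifs <;> omega
  · rw [excess_of_length_le hk, excess_of_length_le (by omega)]
    omega

lemma excess_cons_A_succ (hy : y ≠ A) (t : List KLetter) :
    excess y (A :: t) (k + 1) = excess y t k + 1 := by
  simp [excess, Ne.symm hy]
  ring

lemma excess_append_of_le_length (l : List KLetter) (hk : k ≤ v.length) :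
    excess y (v ++ l) k = excess y v k := by
  rw [excess, excess, List.take_append_of_le_length hk]

lemma excess_set_of_le {i : ℕ} (a : KLetter) (hk : k ≤ i) :
    excess y (v.set i a) k = excess y v k := by
  rw [excess, excess, List.take_set, List.set_eq_of_length_le (by simp; omega)]

lemma excess_set_A_of_lt {i : ℕ} (hy : y ≠ A) (hik : i < k) (hi : i < v.length)
    (hvi : v.getD i A ≠ A) :
    excess y (v.set i A) k = excess y v k + 1 + (if v.getD i A = y then 1 else 0) := by
  have hi' : i < (v.take k).length := by simp; omega
  have hget : (v.take k)[i] = v.getD i A := by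
    rw [List.getElem_take, List.getD_eq_getElem _ _ hi]
  rw [List.getD_eq_getElem _ _ hi] at hvi
  rw [excess, excess, List.take_set, List.count_set hi', List.count_set hi', hget,
    List.getD_eq_getElem _ _ hi]
  have hpos : 0 < (v.take k).count v[i] := by
    have hmem := List.getElem_mem hi'
    rw [List.getElem_take] at hmem
    exact List.count_pos_iff.mpr hmem
  by_cases hvy : v[i] = y
  · subst hvy
    simp [hvi, Ne.symm hy]
    omega
  · simp [hvi, Ne.symm hy, hvy]
    ring

end Excess

lemma exists_mem_Ioc_eq_of_sub_one_le_succ {f : ℕ → ℤ} (hf : ∀ k, f k - 1 ≤ f (k + 1))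
    {a b : ℕ} {t : ℤ} (hab : a ≤ b) (ha : t < f a) (hb : f b ≤ t) :
    ∃ j ∈ Set.Ioc a b, f j = t := by
  induction b, hab using Nat.le_induction with
  | base => omega
  | succ b hab ih =>
    by_cases hfb : f b ≤ t
    · obtain ⟨j, ⟨hj₁, hj₂⟩, hj⟩ := ih hfb
      exact ⟨j, ⟨hj₁, by omega⟩, hj⟩
    · exact ⟨b + 1, ⟨by omega, le_rfl⟩, by have := hf b; omega⟩

lemma kiota_isLeast_of_touchesAxis {v : List KLetter} {k : ℕ} (hk : 1 ≤ k)
    (hkv : k ≤ v.length) (h : TouchesAxis v k) :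
    IsLeast {j | 1 ≤ j ∧ TouchesAxis v j} (kiota v) := by
  have hP : ∀ j, ((decide (1 ≤ j) && (((v.take j).count A == (v.take j).count B) ||
      ((v.take j).count A == (v.take j).count C))) = true) ↔ 1 ≤ j ∧ TouchesAxis v j := by
    intro j
    simp [TouchesAxis, excess, sub_eq_zero]
  unfold kiota
  rw [List.headD_eq_head?_getD, List.head?_filter]
  rcases hi : List.find? _ (List.range (v.length + 1)) with _ | i
  · rw [List.find?_range_eq_none] at hi
    simpa [(hP k).mpr ⟨hk, h⟩] using hi k (Nat.lt_succ_of_le hkv)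
  rw [List.find?_range_eq_some] at hi
  rw [Option.getD_some]
  refine ⟨(hP i).mp hi.1, fun j hj => ?_⟩
  by_contra! hji
  simpa [(hP j).mpr hj] using hi.2.2 j hji

open List in
lemma List.set_append_singleton_getElem_perm {α : Type*} {t : List α} {i : ℕ}
    (hi : i < t.length) (a : α) : (t.set i a ++ [t[i]]).Perm (a :: t) :=
  calc (t.set i a ++ [t[i]]).Perm (t[i] :: t.set i a) := List.perm_append_comm
    _ ~ t[i] :: a :: t.eraseIdx i := (List.set_perm_cons_eraseIdx hi a).cons _
    _ ~ a :: t[i] :: t.eraseIdx i := List.Perm.swap _ _ _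
    _ ~ a :: t := (List.getElem_cons_eraseIdx_perm hi).cons a

section Pro

lemma keps_one (v : List KLetter) : keps v 1 = v.getD (kiota v - 1) A := rfl

lemma keps_iterate_pro (v : List KLetter) (t : ℕ) {i : ℕ} (hi : 1 ≤ i) :
    keps (pro^[t] v) i = keps v (i + t) := by
  rw [keps, keps, ← Function.iterate_add_apply, show i - 1 + t = i + t - 1 by omega]

lemma pro_cons {t : List KLetter} {a : KLetter} (h : 2 ≤ kiota (a :: t)) :
    pro (a :: t) = t.set (kiota (a :: t) - 2) A ++ [t.getD (kiota (a :: t) - 2) A] := by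
  rw [pro, List.drop_one, List.tail_cons,
    show kiota (a :: t) - 1 = kiota (a :: t) - 2 + 1 by omega, List.getD_cons_succ]

lemma getD_pro_of_ne {v : List KLetter} {k : ℕ} (hk : k + 1 < v.length)
    (hne : k ≠ kiota v - 2) : (pro v).getD k A = v.getD (k + 1) A := by
  rw [pro, List.getD_append _ _ _ _ (by simp; omega), List.getD_eq_getElem?_getD,
    List.getElem?_set_ne (Ne.symm hne), List.getElem?_drop,
    List.getD_eq_getElem?_getD, add_comm]

lemma getD_pro_kiota {v : List KLetter} (h₁ : 2 ≤ kiota v) (h₂ : kiota v ≤ v.length) :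
    (pro v).getD (kiota v - 2) A = A := by
  rw [pro, List.getD_append _ _ _ _ (by simp; omega), List.getD_eq_getElem?_getD,
    List.getElem?_set_self (by simp; omega), Option.getD_some]

lemma getD_pro_length_sub_one (v : List KLetter) : (pro v).getD (v.length - 1) A = keps v 1 := by
  rw [pro, List.getD_append_right _ _ _ _ (by simp)]
  simp [keps_one]

end Pro

lemma isKrewerasWord_of_perm {n : ℕ} {v w : List KLetter} (hw : IsKrewerasWord n w)
    (hp : v.Perm w) (hex : ∀ y ≠ A, ∀ k, 0 ≤ excess y v k) : IsKrewerasWord n v := by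
  refine ⟨hp.length_eq.trans hw.1, (hp.count_eq A).trans hw.2.1, (hp.count_eq B).trans hw.2.2.1,
    (hp.count_eq C).trans hw.2.2.2.1, fun k => ⟨?_, ?_⟩⟩
  · have := hex B (by decide) k
    simp only [excess] at this
    omega
  · have := hex C (by decide) k
    simp only [excess] at this
    omega

namespace IsKrewerasWord

variable {n : ℕ} {v : List KLetter} {y : KLetter} {k : ℕ}

lemma excess_nonneg (hv : IsKrewerasWord n v) (hy : y ≠ A) (k : ℕ) : 0 ≤ excess y v k := by
  have := hv.2.2.2.2 k
  cases y <;> simp_all [excess]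

lemma excess_eq_zero_of_length_le (hv : IsKrewerasWord n v) (hy : y ≠ A) (hk : v.length ≤ k) :
    excess y v k = 0 := by
  rw [excess_of_length_le hk]
  obtain ⟨-, hA, hB, hC, -⟩ := hv
  cases y <;> simp_all

lemma eq_cons (hv : IsKrewerasWord n v) (hn : 0 < n) : ∃ t, v = A :: t := by
  obtain ⟨hlen, -, -, -, hpre⟩ := hv
  rcases v with _ | ⟨a, t⟩
  · simp at hlen; omega
  · have := hpre 1
    cases a <;> simp_all

lemma excess_one (hv : IsKrewerasWord n v) (hn : 0 < n) (hy : y ≠ A) : excess y v 1 = 1 := by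
  obtain ⟨t, rfl⟩ := hv.eq_cons hn
  rw [excess_cons_A_succ hy, excess_zero, zero_add]

lemma kiota_isLeast (hv : IsKrewerasWord n v) (hn : 0 < n) :
    IsLeast {j | 1 ≤ j ∧ TouchesAxis v j} (kiota v) :=
  kiota_isLeast_of_touchesAxis (k := v.length) (by rw [hv.1]; omega) le_rfl
    (Or.inl (hv.excess_eq_zero_of_length_le (by decide) le_rfl))

lemma kiota_le (hv : IsKrewerasWord n v) (hn : 0 < n) : kiota v ≤ 3 * n :=
  (hv.kiota_isLeast hn).2
    ⟨by omega, Or.inl (hv.excess_eq_zero_of_length_le (by decide) hv.1.le)⟩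

lemma kiota_sub_one_lt_length (hv : IsKrewerasWord n v) (hn : 0 < n) :
    kiota v - 1 < v.length := by
  have := hv.kiota_le hn
  have := hv.1
  omega

lemma two_le_kiota (hv : IsKrewerasWord n v) (hn : 0 < n) : 2 ≤ kiota v := by
  obtain ⟨h₁, htouch⟩ := (hv.kiota_isLeast hn).1
  have : kiota v ≠ 1 := by
    rintro h
    rw [h] at htouch
    rcases htouch with h | h <;> simp [hv.excess_one hn] at h
  omega

lemma excess_pos_of_lt_kiota (hv : IsKrewerasWord n v) (hn : 0 < n) (hy : y ≠ A) (hk₁ : 1 ≤ k)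
    (hk : k < kiota v) : 0 < excess y v k := by
  refine (hv.excess_nonneg hy k).lt_of_ne fun h => ?_
  have : kiota v ≤ k := (hv.kiota_isLeast hn).2 ⟨hk₁, by cases y <;> simp_all [TouchesAxis]⟩
  omega

lemma keps_one_ne_A (hv : IsKrewerasWord n v) (hn : 0 < n) : keps v 1 ≠ A := by
  intro hA
  have h₂ := hv.two_le_kiota hn
  have hstep : ∀ z ≠ A, excess z v (kiota v) = excess z v (kiota v - 1) + 1 := by
    intro z hz
    have := excess_succ (y := z) (hv.kiota_sub_one_lt_length hn)
    rw [Nat.sub_add_cancel (by omega), ← keps_one, hA] at this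
    simpa [Ne.symm hz] using this
  have hB := hv.excess_pos_of_lt_kiota hn (y := B) (k := kiota v - 1) (by decide) (by omega)
    (by omega)
  have hC := hv.excess_pos_of_lt_kiota hn (y := C) (k := kiota v - 1) (by decide) (by omega)
    (by omega)
  rcases (hv.kiota_isLeast hn).1.2 with h | h
  · rw [hstep B (by decide)] at h; omega
  · rw [hstep C (by decide)] at h; omega

lemma excess_kiota (hv : IsKrewerasWord n v) (hn : 0 < n) :
    excess y v (kiota v) = excess y v (kiota v - 1) - if keps v 1 = y then 1 else 0 := by
  have h₂ := hv.two_le_kiota hn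
  have := excess_succ (y := y) (hv.kiota_sub_one_lt_length hn)
  rwa [Nat.sub_add_cancel (by omega), ← keps_one, if_neg (hv.keps_one_ne_A hn), add_zero] at this

lemma keps_one_eq_iff (hv : IsKrewerasWord n v) (hn : 0 < n) (hy : y ≠ A) :
    keps v 1 = y ↔ excess y v (kiota v) = 0 := by
  have h₂ := hv.two_le_kiota hn
  have hpos : ∀ z ≠ A, keps v 1 ≠ z → 0 < excess z v (kiota v) := by
    intro z hz hzx
    rw [hv.excess_kiota hn, if_neg hzx, sub_zero]
    exact hv.excess_pos_of_lt_kiota hn hz (by omega) (by omega)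
  have hzero : ∀ z ≠ A, excess z v (kiota v) = 0 → keps v 1 = z :=
    fun z hz h => by_contra fun hne => (hpos z hz hne).ne' h
  refine ⟨?_, hzero y hy⟩
  rintro rfl
  rcases (hv.kiota_isLeast hn).1.2 with h | h
  · rwa [hzero B (by decide) h]
  · rwa [hzero C (by decide) h]

lemma excess_pro_of_lt (hv : IsKrewerasWord n v) (hn : 0 < n) (hy : y ≠ A)
    (hk : k + 1 < kiota v) : excess y (pro v) k = excess y v (k + 1) - 1 := by
  have h₂ := hv.two_le_kiota hn
  have hι := hv.kiota_le hn
  have hlen := hv.1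
  obtain ⟨t, rfl⟩ := hv.eq_cons hn
  simp only [List.length_cons] at hlen
  rw [pro_cons h₂, excess_append_of_le_length _ (by simp; omega), excess_set_of_le _ (by omega),
    excess_cons_A_succ hy, add_sub_cancel_right]

lemma excess_pro_of_le (hv : IsKrewerasWord n v) (hn : 0 < n) (hy : y ≠ A)
    (hk₁ : kiota v ≤ k + 1) (hk₂ : k < v.length) :
    excess y (pro v) k = excess y v (k + 1) + if keps v 1 = y then 1 else 0 := by
  have h₂ := hv.two_le_kiota hn
  have hx := hv.keps_one_ne_A hn
  obtain ⟨t, rfl⟩ := hv.eq_cons hn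
  simp only [List.length_cons] at hk₂
  rw [keps_one, show kiota (A :: t) - 1 = kiota (A :: t) - 2 + 1 by omega,
    List.getD_cons_succ] at hx ⊢
  rw [pro_cons h₂, excess_append_of_le_length _ (by simp; omega),
    excess_set_A_of_lt hy (by omega) (by omega) hx, excess_cons_A_succ hy]

lemma pro_perm (hv : IsKrewerasWord n v) (hn : 0 < n) : (pro v).Perm v := by
  have h₂ := hv.two_le_kiota hn
  have hι := hv.kiota_le hn
  have hlen := hv.1
  obtain ⟨t, rfl⟩ := hv.eq_cons hn
  simp only [List.length_cons] at hlen
  rw [pro_cons h₂, List.getD_eq_getElem _ _ (by omega)]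
  exact List.set_append_singleton_getElem_perm (by omega) A

end IsKrewerasWord

section

variable {n : ℕ} {v : List KLetter}

lemma isKrewerasWord_pro (hv : IsKrewerasWord n v) (hn : 0 < n) : IsKrewerasWord n (pro v) := by
  have hp := hv.pro_perm hn
  refine isKrewerasWord_of_perm hv hp fun y hy k => ?_
  rcases lt_or_ge k v.length with hk | hk
  · rcases lt_or_ge (k + 1) (kiota v) with hι | hι
    · rw [hv.excess_pro_of_lt hn hy hι]
      have := hv.excess_pos_of_lt_kiota hn hy (k := k + 1) (by omega) hι
      omega
    · rw [hv.excess_pro_of_le hn hy hι hk]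
      have := hv.excess_nonneg hy (k + 1)
      split_ifs <;> omega
  · rw [excess_of_length_le (hp.length_eq ▸ hk), hp.count_eq, hp.count_eq,
      ← excess_of_length_le hk]
    exact hv.excess_nonneg hy k

lemma isKrewerasWord_iterate_pro (hv : IsKrewerasWord n v) (hn : 0 < n) (t : ℕ) :
    IsKrewerasWord n (pro^[t] v) := by
  induction t with
  | zero => exact hv
  | succ t ih => rw [Function.iterate_succ_apply']; exact isKrewerasWord_pro ih hn

end

lemma negL_ne_A {y : KLetter} (hy : y ≠ A) : negL y ≠ A := by
  cases y <;> simp_all [negL]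

@[simp]
lemma negL_negL (y : KLetter) : negL (negL y) = y := by
  cases y <;> rfl

def ReturnsFirstAt (y : KLetter) (v : List KLetter) (q j : ℕ) : Prop :=
  q < j ∧ j ≤ v.length ∧ excess y v j = excess y v q ∧
    ∀ k, q < k → k ≤ j → excess (negL y) v k ≠ excess (negL y) v q

def ReturnsFirst (y : KLetter) (v : List KLetter) (q : ℕ) : Prop :=
  ∃ j, ReturnsFirstAt y v q j

section ReturnsFirst

variable {n q j : ℕ} {y : KLetter} {v w : List KLetter}

lemma ReturnsFirstAt.exists_le_of_excess_eq (h : ReturnsFirstAt y v q j) {m : ℕ} (hqm : q < m)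
    (hm : m ≤ v.length)
    (hret : excess y v m = excess y v q ∨ excess (negL y) v m = excess (negL y) v q) :
    ∃ J ≤ m, ReturnsFirstAt y v q J := by
  obtain ⟨hqj, hj, hjy, hjo⟩ := h
  rcases hret with hmy | hmo
  · rcases le_total j m with hjm | hmj
    · exact ⟨j, hjm, hqj, hj, hjy, hjo⟩
    · exact ⟨m, le_rfl, hqm, hm, hmy, fun k hk₁ hk₂ => hjo k hk₁ (hk₂.trans hmj)⟩
  · refine ⟨j, ?_, hqj, hj, hjy, hjo⟩
    by_contra! hmj
    exact hjo m hqm hmj.le hmo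

lemma ReturnsFirstAt.shift (h : ReturnsFirstAt y v q j) (hy : y ≠ A) (hq : 1 ≤ q)
    (hj : j ≤ w.length + 1) (c : KLetter → ℤ)
    (hshift : ∀ z ≠ A, ∀ k, q ≤ k + 1 → k + 1 ≤ j →
      excess z w k = excess z v (k + 1) + c z) :
    ReturnsFirstAt y w (q - 1) (j - 1) := by
  obtain ⟨hqj, -, hjy, hjo⟩ := h
  have hshift' : ∀ z ≠ A, ∀ k, q ≤ k → k ≤ j →
      excess z w (k - 1) = excess z v k + c z := by
    intro z hz k hk₁ hk₂
    simpa [Nat.sub_add_cancel (hq.trans hk₁)] using hshift z hz (k - 1) (by omega) (by omega)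
  have ho := negL_ne_A hy
  refine ⟨by omega, by omega, ?_, fun k hk₁ hk₂ => ?_⟩
  · rw [hshift' y hy j hqj.le le_rfl, hshift' y hy q le_rfl hqj.le, hjy]
  · rw [hshift _ ho k (by omega) (by omega), hshift' _ ho q le_rfl hqj.le]
    have := hjo (k + 1) (by omega) (by omega)
    contrapose! this
    linarith

lemma ReturnsFirst.exists_lt_kiota (hv : IsKrewerasWord n v) (hn : 0 < n) (hy : y ≠ A)
    (hq : 1 ≤ q) (hqι : q + 1 < kiota v) (hA : v.getD q A = A) (h : ReturnsFirst y v q) :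
    ∃ J < kiota v, ReturnsFirstAt y v q J := by
  obtain ⟨j, hj⟩ := h
  have hι := hv.kiota_le hn
  have hlen := hv.1
  have hx := hv.keps_one_ne_A hn
  have hup : excess (keps v 1) v (q + 1) = excess (keps v 1) v q + 1 := by
    rw [excess_succ (by omega), hA]
    simp [Ne.symm hx]
  have hpos := hv.excess_pos_of_lt_kiota hn hx hq (by omega)
  have hzero := (hv.keps_one_eq_iff hn hx).1 rfl
  obtain ⟨m, ⟨hm₁, hm₂⟩, hm⟩ := exists_mem_Ioc_eq_of_sub_one_le_succ
    (f := excess (keps v 1) v) (fun _ => sub_one_le_excess_succ) (show q + 1 ≤ kiota v by omega)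
    (show excess (keps v 1) v q < _ by omega) (show _ ≤ excess (keps v 1) v q by omega)
  have hmι : m < kiota v := lt_of_le_of_ne hm₂ (by rintro rfl; omega)
  obtain ⟨J, hJm, hJ⟩ := hj.exists_le_of_excess_eq (m := m) (by omega) (by omega) (by
    cases h : keps v 1 <;> cases y <;> simp_all [negL])
  exact ⟨J, by omega, hJ⟩

lemma ReturnsFirst.pro_of_getD_eq_A (h : ReturnsFirst y v q) (hv : IsKrewerasWord n v) (hn : 0 < n)
    (hy : y ≠ A) (hq : 1 ≤ q) (hA : v.getD q A = A) : ReturnsFirst y (pro v) (q - 1) := by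
  have hlen : (pro v).length = v.length := (hv.pro_perm hn).length_eq
  have hqι : q ≠ kiota v - 1 := fun h => hv.keps_one_ne_A hn (by rw [keps_one, ← h, hA])
  rcases lt_or_gt_of_ne hqι with hlt | hgt
  · obtain ⟨J, hJι, hJ⟩ := h.exists_lt_kiota hv hn hy hq (by omega) hA
    have := hv.kiota_le hn
    have := hv.1
    exact ⟨J - 1, hJ.shift hy hq (by omega) (fun _ => -1)
      fun z hz k _ hk => hv.excess_pro_of_lt hn hz (by omega)⟩
  · obtain ⟨j, hj⟩ := h
    have := hj.2.1
    exact ⟨j - 1, hj.shift hy hq (by omega) (fun z => if keps v 1 = z then 1 else 0)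
      fun z hz k hk₁ hk₂ => hv.excess_pro_of_le hn hz (by omega) (by omega)⟩

end ReturnsFirst

section Promotion

variable {n q : ℕ} {y : KLetter} {v : List KLetter}

lemma ReturnsFirst.iterate_pro (h : ReturnsFirst y v q) (hv : IsKrewerasWord n v) (hn : 0 < n)
    (hy : y ≠ A) (hA : v.getD q A = A) : ReturnsFirst y (pro^[q] v) 0 := by
  induction q generalizing v with
  | zero => exact h
  | succ q ih =>
    have hq : q + 1 < v.length := by
      obtain ⟨j, hj⟩ := h
      exact hj.1.trans_le hj.2.1
    rw [Function.iterate_succ_apply]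
    refine ih (by simpa using h.pro_of_getD_eq_A hv hn hy (by omega) hA)
      (isKrewerasWord_pro hv hn) ?_
    by_cases hι : q = kiota v - 2
    · rw [hι]
      exact getD_pro_kiota (hv.two_le_kiota hn) (hv.1 ▸ hv.kiota_le hn)
    · rwa [getD_pro_of_ne hq hι]

lemma ReturnsFirst.keps_one_eq (h : ReturnsFirst y v 0) (hv : IsKrewerasWord n v) (hy : y ≠ A) :
    keps v 1 = y := by
  obtain ⟨j, hj₀, hjl, hjy, hjo⟩ := h
  have hn : 0 < n := by have := hv.1; omega
  simp only [excess_zero] at hjy hjo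
  have hιj : kiota v ≤ j :=
    (hv.kiota_isLeast hn).2 ⟨hj₀, by cases y <;> simp_all [TouchesAxis]⟩
  have hne := hjo (kiota v) (by have := hv.two_le_kiota hn; omega) hιj
  have htouch := (hv.kiota_isLeast hn).1.2
  rw [hv.keps_one_eq_iff hn hy]
  cases y <;> simp_all [TouchesAxis, negL]

lemma returnsFirst_pro_kiota (hv : IsKrewerasWord n v) (hn : 0 < n) :
    ReturnsFirst (negL (keps v 1)) (pro v) (kiota v - 2) := by
  have h₂ := hv.two_le_kiota hn
  have hι := hv.kiota_le hn
  have hlen := hv.1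
  have hx := hv.keps_one_ne_A hn
  have ho := negL_ne_A hx
  have hx₁ : excess (keps v 1) v (kiota v - 1) = 1 := by
    have := hv.excess_kiota hn (y := keps v 1)
    rw [(hv.keps_one_eq_iff hn hx).1 rfl, if_pos rfl] at this
    omega
  have ho₁ : excess (negL (keps v 1)) v (kiota v) = excess (negL (keps v 1)) v (kiota v - 1) := by
    rw [hv.excess_kiota hn, if_neg (by cases h : keps v 1 <;> simp_all [negL]), sub_zero]
  have hopos := hv.excess_pos_of_lt_kiota hn ho (k := kiota v - 1) (by omega) (by omega)
  obtain ⟨j, ⟨hj₁, hj₂⟩, hj⟩ := exists_mem_Ioc_eq_of_sub_one_le_succ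
    (f := excess (negL (keps v 1)) v) (t := excess (negL (keps v 1)) v (kiota v) - 1)
    (fun _ => sub_one_le_excess_succ) hι (by omega)
    (by rw [hv.excess_eq_zero_of_length_le ho hlen.le]; omega)
  refine ⟨j - 1, by omega, by rw [(hv.pro_perm hn).length_eq]; omega, ?_,
    fun k hk₁ hk₂ => ?_⟩
  · rw [hv.excess_pro_of_le hn ho (by omega) (by omega), hv.excess_pro_of_lt hn ho (by omega),
      if_neg (by cases h : keps v 1 <;> simp_all [negL]), Nat.sub_add_cancel (by omega),
      show kiota v - 2 + 1 = kiota v - 1 by omega, hj, ho₁, add_zero]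
  · rw [negL_negL, hv.excess_pro_of_le hn hx (by omega) (by omega),
      hv.excess_pro_of_lt hn hx (by omega), if_pos rfl,
      show kiota v - 2 + 1 = kiota v - 1 by omega, hx₁]
    have := hv.excess_nonneg hx (k + 1)
    omega

lemma IsKrewerasWord.keps_kiota (hv : IsKrewerasWord n v) (hn : 0 < n) :
    keps v (kiota v) = negL (keps v 1) := by
  have h₂ := hv.two_le_kiota hn
  have hret := (returnsFirst_pro_kiota hv hn).iterate_pro (isKrewerasWord_pro hv hn) hn
    (negL_ne_A (hv.keps_one_ne_A hn)) (getD_pro_kiota h₂ (hv.1 ▸ hv.kiota_le hn))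
  calc keps v (kiota v) = keps (pro^[kiota v - 2] (pro v)) 1 := by
        rw [← Function.iterate_succ_apply, keps_iterate_pro _ _ le_rfl]
        congr 1
        omega
    _ = negL (keps v 1) :=
        hret.keps_one_eq (isKrewerasWord_iterate_pro (isKrewerasWord_pro hv hn) hn _)
          (negL_ne_A (hv.keps_one_ne_A hn))

lemma IsKrewerasWord.exists_kiota_iterate_pro_eq (hv : IsKrewerasWord n v) {p : ℕ}
    (hp : v.getD p A ≠ A) :
    ∃ t ≤ p, kiota (pro^[t] v) = p - t + 1 ∧ keps (pro^[t] v) 1 = v.getD p A := by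
  have hpl : p < v.length := by
    by_contra! h
    exact hp (List.getD_eq_default _ _ h)
  have hn : 0 < n := by have := hv.1; omega
  induction p generalizing v with
  | zero =>
    obtain ⟨t, rfl⟩ := hv.eq_cons hn
    exact absurd rfl hp
  | succ p ih =>
    by_cases hι : kiota v = p + 2
    · exact ⟨0, by omega, hι, by rw [Function.iterate_zero_apply, keps_one, hι]; rfl⟩
    · have hget : (pro v).getD p A = v.getD (p + 1) A :=
        getD_pro_of_ne hpl (by have := hv.two_le_kiota hn; omega)
      obtain ⟨t, ht, hk, hl⟩ := ih (isKrewerasWord_pro hv hn) (hget ▸ hp)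
        (by rw [(hv.pro_perm hn).length_eq]; omega)
      refine ⟨t + 1, by omega, ?_, ?_⟩ <;> rw [Function.iterate_succ_apply]
      · omega
      · rw [hl, hget]

end Promotion

/-- `ε_{pro(w)}(i) = ε_w(i+1)` for `1 ≤ i ≤ 3n - 1`, and `ε_{pro(w)}(3n) = -ε_w(1)`,
where `-B = C` and `-C = B`. -/
theorem keps_pro (n : ℕ) (w : List KLetter) (hw : IsKrewerasWord n w) :
    (∀ i : ℕ, 1 ≤ i → i ≤ 3 * n - 1 → keps (pro w) i = keps w (i + 1)) ∧
    keps (pro w) (3 * n) = negL (keps w 1) := by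
  refine ⟨fun i hi _ => by simpa using keps_iterate_pro w 1 hi, ?_⟩
  rcases n.eq_zero_or_pos with rfl | hn
  · obtain rfl : w = [] := List.length_eq_zero_iff.mp hw.1
    rfl
  have hpro := isKrewerasWord_pro hw hn
  obtain ⟨t, ht, hkiota, hletter⟩ := hpro.exists_kiota_iterate_pro_eq (p := 3 * n - 1)
    (by rw [← hw.1, getD_pro_length_sub_one]; exact hw.keps_one_ne_A hn)
  rw [← hw.1, getD_pro_length_sub_one] at hletter
  calc keps (pro w) (3 * n) = keps (pro^[t] (pro w)) (kiota (pro^[t] (pro w))) := by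
        rw [keps_iterate_pro _ _ (by omega), hkiota]
        congr 1
        omega
    _ = negL (keps w 1) := by
        rw [(isKrewerasWord_iterate_pro hpro hn t).keps_kiota hn, hletter]
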